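/- Let Γ be a rooted digraph satisfying P0, P1 and P2. Then Γ satisfies P3 if and only if there exist vertices x, y ∈ Γ such that desc(x) ∩ desc(y) = ∅. -/

import Mathlib

variable {V : Type*}

/-- Directed walks of length `n` (`n`-arcs). -/
def arcOf (E : V → V → Prop) : ℕ → V → V → Prop
  | 0 => fun x y => x = y
  | n + 1 => fun x y => ∃ z, E x z ∧ arcOf E n z y

/-- Vertices reachable from `x` by a directed path of length exactly `n`. -/
def descN (E : V → V → Prop) (n : ℕ) (x : V) : Set V := {y | arcOf E n x y}

/-- The descendant set of `x` (including `x` itself). -/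
def desc (E : V → V → Prop) (x : V) : Set V := {y | ∃ n, arcOf E n x y}

theorem self_mem_desc (E : V → V → Prop) (x : V) : x ∈ desc E x := ⟨0, by simp [arcOf]⟩

def descSet (E : V → V → Prop) (S : Set V) : Set V := ⋃ x ∈ S, desc E x

theorem self_mem_descSet (E : V → V → Prop) {S : Set V} {x : V} (hx : x ∈ S) :
    x ∈ descSet E S := Set.mem_biUnion hx (self_mem_desc E x)

def outSet (E : V → V → Prop) (x : V) : Set V := {y | E x y}

def inSet (E : V → V → Prop) (x : V) : Set V := {y | E y x}

def IsAut (E : V → V → Prop) (g : Equiv.Perm V) : Prop := ∀ x y, E x y ↔ E (g x) (g y)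

def Rooted (E : V → V → Prop) (α : V) : Prop := ∀ y, y ∈ desc E α

def P0 (E : V → V → Prop) (α : V) (m : ℕ) : Prop :=
  0 < m ∧ (∀ x, (outSet E x).Finite ∧ (outSet E x).ncard = m) ∧
    ∀ s t : ℕ, s ≠ t → Disjoint (descN E s α) (descN E t α)

def P1 (E : V → V → Prop) : Prop :=
  ∀ u : V, ∃ f : desc E u ≃ V, ∀ x y : desc E u, (E x.1 y.1 ↔ E (f x) (f y))

def P2 (E : V → V → Prop) (α : V) : Prop :=
  ∀ i : ℕ, ∀ x ∈ descN E i α, ∀ y ∈ descN E i α,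
    ∃ g : Equiv.Perm V, IsAut E g ∧ g α = α ∧ g x = y

def P3 (E : V → V → Prop) (α : V) : Prop :=
  ∀ i : ℕ, (descN E i α).ncard < (descN E (i + 1) α).ncard

def EdgeTrans (E : V → V → Prop) : Prop :=
  ∀ a b c d : V, E a b → E c d → ∃ g : Equiv.Perm V, IsAut E g ∧ g a = c ∧ g b = d

def VertexTrans (E : V → V → Prop) : Prop :=
  ∀ u v : V, ∃ g : Equiv.Perm V, IsAut E g ∧ g u = v

def NoDirectedCycles (E : V → V → Prop) : Prop :=
  ∀ s : ℕ, 1 ≤ s → ∀ x : V, ¬ arcOf E s x x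

def HasPropZ {W : Type*} (E : W → W → Prop) : Prop :=
  ∃ f : W → ℤ, Function.Surjective f ∧ ∀ x y : W, E x y → f y = f x + 1

def deltaSetoid (E : V → V → Prop) (n : ℕ) : Setoid V :=
  ⟨fun u v => descN E n u = descN E n v, ⟨fun _ => rfl, Eq.symm, Eq.trans⟩⟩

def QEdge (E : V → V → Prop) (n : ℕ)
    (A B : Quotient (deltaSetoid E n)) : Prop :=
  ∃ a b : V, Quotient.mk (deltaSetoid E n) a = A ∧ Quotient.mk (deltaSetoid E n) b = B ∧ E a b

def cls (E : V → V → Prop) (n : ℕ) (v : V) : Set V := {u | descN E n u = descN E n v}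

def QEdgeSet (E : V → V → Prop) (A B : Set V) : Prop := ∃ a ∈ A, ∃ b ∈ B, E a b

def WDH (E : V → V → Prop) : Prop :=
  VertexTrans E ∧
  ∀ (X Y : Finset V) (f : descSet E (↑X : Set V) ≃ descSet E (↑Y : Set V)),
    (∀ a b : descSet E (↑X : Set V), (E a.1 b.1 ↔ E (f a).1 (f b).1)) →
    ∃ g : Equiv.Perm V, IsAut E g ∧
      ∀ (x : V) (hx : x ∈ X), g x = (f ⟨x, self_mem_descSet E (by exact_mod_cast hx)⟩).1

def EdgeT (E : V → V → Prop) := {p : V × V // E p.1 p.2}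

def reachSetoid (E : V → V → Prop) : Setoid (EdgeT E) :=
  ⟨Relation.EqvGen (fun a b => a.1.1 = b.1.1 ∨ a.1.2 = b.1.2),
    Relation.EqvGen.is_equivalence _⟩

def AlSources (E : V → V → Prop) (A : Quotient (reachSetoid E)) : Set V :=
  {v | ∃ e : EdgeT E, Quotient.mk (reachSetoid E) e = A ∧ v = e.1.1}

def AlSinks (E : V → V → Prop) (A : Quotient (reachSetoid E)) : Set V :=
  {v | ∃ e : EdgeT E, Quotient.mk (reachSetoid E) e = A ∧ v = e.1.2}

def AlEdge (E : V → V → Prop) (A B : Quotient (reachSetoid E)) : Prop :=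
  ∃ v, v ∈ AlSinks E A ∧ v ∈ AlSources E B

/-!
If two descendant sets are disjoint and `P3` failed at level `i`, then for every arc `w → u` the
level `Γⁱ(u)` would fill `Γⁱ⁺¹(w)` (by `P1` all vertices have levels of the same sizes), so `Γⁱ(v)`
would depend only on the distance of `v` from `α`; any two descendant sets would then share those
(nonempty) sets. Conversely, if all descendant sets meet, the finitely many out-neighbours of `α`
have a common descendant `w`, necessarily at the same distance `n` from each of them. Since
`Aut(Γ)_α` is transitive on `Γⁿ⁺¹(α)` and permutes the out-neighbours of `α`, this gives
`Γⁿ⁺¹(α) ⊆ Γⁿ(u)` for an out-neighbour `u`, whence `|Γⁿ⁺¹(α)| ≤ |Γⁿ(α)|`.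
-/

section Walks

variable {E : V → V → Prop}

theorem arcOf_add (m n : ℕ) (x y : V) :
    arcOf E (m + n) x y ↔ ∃ z, arcOf E m x z ∧ arcOf E n z y := by
  induction m generalizing x with
  | zero => simp [arcOf]
  | succ k ih =>
    rw [Nat.add_right_comm]
    simp only [arcOf, ih]
    aesop

@[simp]
theorem mem_descN {n : ℕ} {x y : V} : y ∈ descN E n x ↔ arcOf E n x y := Iff.rfl

theorem arcOf_one {x y : V} : arcOf E 1 x y ↔ E x y := by
  simp [arcOf]

theorem descN_zero (x : V) : descN E 0 x = {x} := by
  ext y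
  simp [descN, arcOf, eq_comm]

theorem descN_succ (n : ℕ) (x : V) : descN E (n + 1) x = ⋃ z ∈ outSet E x, descN E n z := by
  ext y
  simp [descN, arcOf, outSet]

theorem descN_succ' (n : ℕ) (x : V) : descN E (n + 1) x = ⋃ z ∈ descN E n x, outSet E z := by
  ext y
  simp [descN, outSet, arcOf_add n 1, arcOf_one]

theorem descN_subset_desc {n : ℕ} {x : V} : descN E n x ⊆ desc E x :=
  fun _ h => ⟨n, h⟩

theorem desc_subset_desc {x y : V} (h : y ∈ desc E x) : desc E y ⊆ desc E x := by
  rintro z ⟨k, hk⟩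
  obtain ⟨n, hn⟩ := h
  exact ⟨n + k, (arcOf_add n k x z).2 ⟨y, hn, hk⟩⟩

theorem descN_finite (hfin : ∀ x, (outSet E x).Finite) (n : ℕ) (x : V) :
    (descN E n x).Finite := by
  induction n generalizing x with
  | zero => simp [descN_zero]
  | succ k ih => simpa [descN_succ] using (hfin x).biUnion fun z _ => ih z

theorem descN_nonempty (hne : ∀ x, (outSet E x).Nonempty) (n : ℕ) (x : V) :
    (descN E n x).Nonempty := by
  induction n generalizing x with
  | zero => simp [descN_zero]
  | succ k ih =>
    obtain ⟨z, hz⟩ := hne x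
    rw [descN_succ]
    exact Set.nonempty_biUnion.2 ⟨z, hz, ih z⟩

theorem IsAut.symm {g : Equiv.Perm V} (hg : IsAut E g) : IsAut E g.symm := fun x y => by
  simpa using (hg (g.symm x) (g.symm y)).symm

theorem IsAut.arcOf {g : Equiv.Perm V} (hg : IsAut E g) {n : ℕ} {x y : V}
    (h : arcOf E n x y) : arcOf E n (g x) (g y) := by
  induction n generalizing x with
  | zero => exact congrArg g h
  | succ k ih =>
    obtain ⟨z, hxz, hzy⟩ := h
    exact ⟨g z, (hg x z).1 hxz, ih hzy⟩

theorem arcOf_iff_of_equiv_desc {u : V} (f : desc E u ≃ V)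
    (hf : ∀ x y : desc E u, E x.1 y.1 ↔ E (f x) (f y)) (n : ℕ) (x y : desc E u) :
    arcOf E n x.1 y.1 ↔ arcOf E n (f x) (f y) := by
  induction n generalizing x with
  | zero => simp [arcOf, Subtype.val_inj]
  | succ k ih =>
    constructor
    · rintro ⟨z, hxz, hzy⟩
      have hz : z ∈ desc E u := desc_subset_desc x.2 ⟨1, arcOf_one.2 hxz⟩
      exact ⟨f ⟨z, hz⟩, (hf x ⟨z, hz⟩).1 hxz, (ih ⟨z, hz⟩).1 hzy⟩
    · rintro ⟨z, hxz, hzy⟩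
      refine ⟨(f.symm z).1, (hf x (f.symm z)).2 (by simpa using hxz), (ih (f.symm z)).2 ?_⟩
      simpa using hzy

end Walks

section Levels

variable {E : V → V → Prop} {α : V}

theorem level_eq_of_mem_descN (hlev : ∀ s t : ℕ, s ≠ t → Disjoint (descN E s α) (descN E t α))
    {s t : ℕ} {x : V} (hs : x ∈ descN E s α) (ht : x ∈ descN E t α) : s = t := by
  by_contra hst
  exact Set.disjoint_left.1 (hlev s t hst) hs ht

theorem eq_of_mem_desc_of_mem_desc
    (hlev : ∀ s t : ℕ, s ≠ t → Disjoint (descN E s α) (descN E t α)) {β : V}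
    (hβ : β ∈ desc E α) (hα : α ∈ desc E β) : β = α := by
  obtain ⟨s, hs⟩ := hβ
  obtain ⟨t, ht⟩ := hα
  have hst : s + t = 0 :=
    level_eq_of_mem_descN hlev ((arcOf_add s t α α).2 ⟨β, hs, ht⟩) (descN_zero α ▸ rfl)
  obtain rfl : s = 0 := by omega
  exact hs.symm

/-- The isomorphism `desc u ≃ Γ` given by `P1` must send `u` to the only root `α`. -/
theorem ncard_descN_eq (hroot : Rooted E α)
    (hlev : ∀ s t : ℕ, s ≠ t → Disjoint (descN E s α) (descN E t α)) (h1 : P1 E) (u : V)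
    (n : ℕ) : (descN E n u).ncard = (descN E n α).ncard := by
  obtain ⟨f, hf⟩ := h1 u
  let u' : desc E u := ⟨u, self_mem_desc E u⟩
  have hmap : ∀ k, descN E k (f u') = f.symm ⁻¹' (Subtype.val ⁻¹' descN E k u) := fun k => by
    ext y
    simpa using (arcOf_iff_of_equiv_desc f hf k u' (f.symm y)).symm
  have hfu : f u' = α := by
    refine eq_of_mem_desc_of_mem_desc hlev (hroot _) ?_
    obtain ⟨k, hk⟩ := (f.symm α).2
    exact descN_subset_desc (n := k) (by simpa [hmap] using hk)
  rw [← hfu, hmap, Set.ncard_preimage_of_injective_subset_range f.symm.injective (by simp),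
    Set.ncard_preimage_of_injective_subset_range Subtype.val_injective]
  simpa using descN_subset_desc

end Levels

section Collapse

variable {E : V → V → Prop} {α : V} {i : ℕ}

theorem descN_eq_descN_add_of_forall_edge
    (h : ∀ w u, E w u → descN E i u = descN E (i + 1) w) {w : V} :
    ∀ k, ∀ v ∈ descN E k w, descN E i v = descN E (k + i) w
  | 0, v, hv => by
    obtain rfl : w = v := hv
    simp
  | k + 1, v, hv => by
    rw [descN_succ'] at hv
    obtain ⟨v', hv', hv'v⟩ := Set.mem_iUnion₂.1 hv
    calc descN E i v = descN E (i + 1) v' := h v' v hv'v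
      _ = ⋃ z ∈ descN E i v', outSet E z := descN_succ' i v'
      _ = ⋃ z ∈ descN E (k + i) w, outSet E z := by
        rw [descN_eq_descN_add_of_forall_edge h k v' hv']
      _ = descN E (k + 1 + i) w := by rw [Nat.add_right_comm, descN_succ']

theorem not_disjoint_desc_of_forall_edge (hroot : Rooted E α)
    (hne : ∀ n x, (descN E n x).Nonempty) (h : ∀ w u, E w u → descN E i u = descN E (i + 1) w)
    (a b : V) : ¬Disjoint (desc E a) (desc E b) := by
  obtain ⟨p, hp⟩ := hroot a
  obtain ⟨q, hq⟩ := hroot b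
  wlog hpq : p ≤ q generalizing a b p q
  · exact fun hab => this b a q hq p hp (by omega) hab.symm
  obtain ⟨a', ha'⟩ := hne (q - p) a
  have ha'q : a' ∈ descN E q α := by
    have := (arcOf_add p (q - p) α a').2 ⟨a, hp, ha'⟩
    rwa [Nat.add_sub_cancel' hpq] at this
  have hab : descN E i a' = descN E i b := by
    rw [descN_eq_descN_add_of_forall_edge h q a' ha'q, descN_eq_descN_add_of_forall_edge h q b hq]
  obtain ⟨z, hz⟩ := hne i a'
  refine Set.not_disjoint_iff.2 ⟨z, ?_, descN_subset_desc (hab ▸ hz)⟩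
  exact desc_subset_desc (descN_subset_desc ha') (descN_subset_desc hz)

theorem P3_of_disjoint_desc (hroot : Rooted E α) (hfin : ∀ x, (outSet E x).Finite)
    (hne : ∀ x, (outSet E x).Nonempty)
    (hsize : ∀ u n, (descN E n u).ncard = (descN E n α).ncard) {x y : V}
    (hxy : Disjoint (desc E x) (desc E y)) : P3 E α := by
  intro i
  by_contra hle
  refine not_disjoint_desc_of_forall_edge hroot (descN_nonempty hne) (i := i)
    (fun w u hwu => ?_) x y hxy
  refine Set.eq_of_subset_of_ncard_le (fun z hz => ⟨u, hwu, hz⟩) ?_ (descN_finite hfin _ w)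
  rw [hsize w, hsize u]
  omega

end Collapse

section Meet

variable {E : V → V → Prop} {α : V}

theorem exists_forall_mem_desc (hmeet : ∀ x y : V, ¬Disjoint (desc E x) (desc E y))
    {S : Finset V} (hS : S.Nonempty) : ∃ w, ∀ u ∈ S, w ∈ desc E u := by
  induction hS using Finset.Nonempty.cons_induction with
  | singleton a => exact ⟨a, by simpa using self_mem_desc E a⟩
  | cons a S _ _ ih =>
    obtain ⟨w, hw⟩ := ih
    obtain ⟨z, hzw, hza⟩ := Set.not_disjoint_iff.1 (hmeet w a)
    exact ⟨z, by simpa [hza] using fun u hu => desc_subset_desc (hw u hu) hzw⟩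

theorem mem_descN_of_mem_desc (hlev : ∀ s t : ℕ, s ≠ t → Disjoint (descN E s α) (descN E t α))
    {n : ℕ} {u w : V} (hu : E α u) (hw : w ∈ descN E (n + 1) α) (hwu : w ∈ desc E u) :
    w ∈ descN E n u := by
  obtain ⟨k, hk⟩ := hwu
  obtain rfl : k = n := by
    have := level_eq_of_mem_descN hlev (show w ∈ descN E (k + 1) α from ⟨u, hu, hk⟩) hw
    omega
  exact hk

theorem descN_succ_subset_descN (h2 : P2 E α) {n : ℕ} {w : V} (hw : w ∈ descN E (n + 1) α)
    (hwu : ∀ u, E α u → w ∈ descN E n u) {u₀ : V} (hu₀ : E α u₀) :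
    descN E (n + 1) α ⊆ descN E n u₀ := by
  intro x hx
  obtain ⟨g, hg, hgα, rfl⟩ := h2 (n + 1) w hw x hx
  have hα : g.symm α = α := g.symm_apply_eq.2 hgα.symm
  have hu : E α (g.symm u₀) := hα ▸ (hg.symm α u₀).1 hu₀
  simpa using hg.arcOf (hwu _ hu)

theorem exists_disjoint_desc_of_P3
    (hlev : ∀ s t : ℕ, s ≠ t → Disjoint (descN E s α) (descN E t α))
    (hfin : ∀ x, (outSet E x).Finite) (hne : (outSet E α).Nonempty) (h2 : P2 E α)
    (hsize : ∀ u n, (descN E n u).ncard = (descN E n α).ncard) (h3 : P3 E α) :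
    ∃ x y, Disjoint (desc E x) (desc E y) := by
  by_contra! hmeet
  obtain ⟨w, hw⟩ := exists_forall_mem_desc hmeet ((hfin α).toFinset_nonempty.2 hne)
  replace hw : ∀ u, E α u → w ∈ desc E u := fun u hu => hw u ((hfin α).mem_toFinset.2 hu)
  obtain ⟨u₀, hu₀⟩ := hne
  obtain ⟨n, hn⟩ := hw u₀ hu₀
  have hwα : w ∈ descN E (n + 1) α := ⟨u₀, hu₀, hn⟩
  have hsub := descN_succ_subset_descN h2 hwα
    (fun u hu => mem_descN_of_mem_desc hlev hu hwα (hw u hu)) hu₀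
  have hle := Set.ncard_le_ncard hsub (descN_finite hfin n u₀)
  rw [hsize u₀] at hle
  exact (h3 n).not_ge hle

end Meet

/-- P3 holds iff two vertices have disjoint descendant sets. -/
theorem P3_iff_disjoint_descendants (E : V → V → Prop) (α : V) (m : ℕ)
    (hroot : Rooted E α) (h0 : P0 E α m) (h1 : P1 E) (h2 : P2 E α) :
    P3 E α ↔ ∃ x y : V, Disjoint (desc E x) (desc E y) := by
  obtain ⟨hm, hout, hlev⟩ := h0
  have hfin : ∀ x, (outSet E x).Finite := fun x => (hout x).1
  have hne : ∀ x, (outSet E x).Nonempty := fun x =>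
    Set.nonempty_of_ncard_ne_zero ((hout x).2 ▸ hm.ne')
  have hsize := ncard_descN_eq hroot hlev h1
  exact ⟨exists_disjoint_desc_of_P3 hlev hfin (hne α) h2 hsize,
    fun ⟨_, _, hxy⟩ => P3_of_disjoint_desc hroot hfin hne hsize hxy⟩
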